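/- arXiv:1205.4576 — 3 statements merged into one kernel-verified Lean document; each statement's English description precedes it below -/
import Mathlib

section
/- Let f be a uniformly random permutation of {0,1}^n and x uniform in {0,1}^n. For any (possibly randomized) oracle algorithm A making at most q queries to f, the probability that A^{f}(f(x)) outputs x is at most (2q+1)/2^n. -/
open Finset
open scoped Classical

/-!
Reprogramming: draw a fresh uniform point `y` and let `f*` be `f` reprogrammed to send `y` to
`f x`. Unless `A` queries `y` (probability at most `q / 2^n`), it cannot tell `f` from `f*`, so
it inverts `f x` against `f*` as well. Replacing `(f, x, y)` by `(f ∘ swap x y, y, x)` is a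
bijection fixing `f*` and `f x`, so against `f*` the run outputs `x` exactly as often as it
outputs `y`; undoing the reprogramming once more, that is at most how often the run against `f`
outputs the independent point `y`, namely `1 / 2^n`, plus `q / 2^n`.
-/

open Function Equiv

lemma card_filter_le_card_filter_add_card_filter {α : Type*} (s : Finset α) {p r b : α → Prop}
    [DecidablePred p] [DecidablePred r] [DecidablePred b] (h : ∀ a ∈ s, p a → ¬b a → r a) :
    #(s.filter p) ≤ #(s.filter r) + #(s.filter b) := by
  refine (card_le_card fun a ha => ?_).trans (card_union_le _ _)
  simp only [mem_union, mem_filter] at ha ⊢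
  by_cases hb : b a
  · exact .inr ⟨ha.1, hb⟩
  · exact .inl ⟨ha.1, h a ha.1 ha.2 hb⟩

lemma card_filter_fst {α β : Type*} [Fintype α] [Fintype β] (p : α → Prop)
    [DecidablePred p] :
    #(univ.filter fun ω : α × β => p ω.1) = #(univ.filter p) * Fintype.card β := by
  rw [← univ_product_univ, filter_product_left, card_product, card_univ]

lemma card_filter_apply_fst_eq_snd {α β : Type*} [Fintype α] [Fintype β] [DecidableEq β]
    (g : α → β) : #(univ.filter fun ω : α × β => g ω.1 = ω.2) = Fintype.card α := by
  rw [card_filter, Fintype.sum_prod_type]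
  simp

lemma card_filter_snd_mem_le {α β : Type*} [Fintype α] [Fintype β] [DecidableEq β]
    (s : α → Finset β) {q : ℕ} (hs : ∀ a, #(s a) ≤ q) :
    #(univ.filter fun ω : α × β => ω.2 ∈ s ω.1) ≤ Fintype.card α * q := by
  rw [card_filter, Fintype.sum_prod_type]
  simpa [← card_filter] using sum_le_card_nsmul univ _ _ fun a _ => hs a

/-- The reprogramming argument, with `run'` the run against the reprogrammed oracle. -/
lemma card_run_eq_le_card_run_eq_add {Ω D : Type*} [Fintype Ω] [DecidableEq D]
    {run run' x y : Ω → D} {bad : Ω → Prop} [DecidablePred bad] {ψ : Ω → Ω}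
    (hψ : Involutive ψ) (hrun' : ∀ ω, run' (ψ ω) = run' ω) (hx : ∀ ω, x (ψ ω) = y ω)
    (hagree : ∀ ω, ¬bad ω → run' ω = run ω) :
    #(univ.filter fun ω => run ω = x ω) ≤
      #(univ.filter fun ω => run ω = y ω) + 2 * #(univ.filter bad) := by
  have h_exchange :
      #(univ.filter fun ω => run' ω = x ω) = #(univ.filter fun ω => run' ω = y ω) :=
    card_nbij' ψ ψ (fun ω => by simp [hrun', ← hx (ψ ω), hψ ω])
      (fun ω => by simp [hrun', hx]) (fun ω _ => hψ ω) (fun ω _ => hψ ω)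
  have h_before := card_filter_le_card_filter_add_card_filter (p := fun ω => run ω = x ω)
    (r := fun ω => run' ω = x ω) univ fun ω _ h hω => (hagree ω hω).trans h
  have h_after := card_filter_le_card_filter_add_card_filter (p := fun ω => run' ω = y ω)
    (r := fun ω => run ω = y ω) univ fun ω _ h hω => (hagree ω hω).symm.trans h
  omega

section Reprogramming

variable {D R : Type*} [DecidableEq D]

/-- The paper's `f_{(y, f x)}`. -/
def reprogram (f : Perm D) (x y : D) : D → D := update f y (f x)

lemma reprogram_swap_trans (f : Perm D) (x y : D) :
    reprogram ((swap x y).trans f) y x = reprogram f x y := by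
  funext u
  simp only [reprogram, update_apply, trans_apply, swap_apply_right, swap_apply_def]
  split_ifs <;> simp_all

def exchangeChallenge (ω : (Perm D × D × R) × D) : (Perm D × D × R) × D :=
  (((swap ω.1.2.1 ω.2).trans ω.1.1, ω.2, ω.1.2.2), ω.1.2.1)

lemma exchangeChallenge_involutive : Involutive (exchangeChallenge (D := D) (R := R)) := by
  rintro ⟨⟨f, x, ρ⟩, y⟩
  simp [exchangeChallenge, swap_comm y x, ← trans_assoc]

theorem card_inverts_mul_card_le [Fintype D] [Fintype R] {A : R → (D → D) → D → D}
    {Q : R → D → (D → D) → Finset D} {q : ℕ}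
    (hQ : ∀ ρ z f g, (∀ u ∈ Q ρ z f, g u = f u) → A ρ g z = A ρ f z)
    (hQcard : ∀ ρ z f, #(Q ρ z f) ≤ q) :
    #(univ.filter fun p : Perm D × D × R => A p.2.2 p.1 (p.1 p.2.1) = p.2.1) * Fintype.card D ≤
      (2 * q + 1) * Fintype.card (Perm D × D × R) := by
  have h_agree (ω : (Perm D × D × R) × D) (hy : ω.2 ∉ Q ω.1.2.2 (ω.1.1 ω.1.2.1) ω.1.1) :
      A ω.1.2.2 (reprogram ω.1.1 ω.1.2.1 ω.2) (ω.1.1 ω.1.2.1) =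
        A ω.1.2.2 ω.1.1 (ω.1.1 ω.1.2.1) :=
    hQ _ _ _ _ fun u hu => update_of_ne (by rintro rfl; exact hy hu) _ _
  have h_count := card_run_eq_le_card_run_eq_add (x := fun ω => ω.1.2.1) (y := fun ω => ω.2)
    (run := fun ω => A ω.1.2.2 ω.1.1 (ω.1.1 ω.1.2.1))
    (bad := fun ω => ω.2 ∈ Q ω.1.2.2 (ω.1.1 ω.1.2.1) ω.1.1) exchangeChallenge_involutive
    (fun ⟨⟨f, x, ρ⟩, y⟩ => by simp [exchangeChallenge, reprogram_swap_trans])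
    (fun _ => rfl) h_agree
  have h_bad := card_filter_snd_mem_le (fun p : Perm D × D × R => Q p.2.2 (p.1 p.2.1) p.1)
    fun _ => hQcard _ _ _
  rw [← card_filter_fst]
  calc _ ≤ _ := h_count
    _ ≤ Fintype.card (Perm D × D × R) + 2 * (Fintype.card (Perm D × D × R) * q) := by
        gcongr
        exact (card_filter_apply_fst_eq_snd
          fun p : Perm D × D × R => A p.2.2 p.1 (p.1 p.2.1)).le
    _ = (2 * q + 1) * Fintype.card (Perm D × D × R) := by ring

end Reprogramming

theorem stmt_7_general (n q : ℕ) {R : Type*} [Fintype R]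
    (A : R → ((Fin n → Bool) → (Fin n → Bool)) → (Fin n → Bool) → (Fin n → Bool))
    (hq : ∀ (ρ : R) (z : Fin n → Bool) (f : (Fin n → Bool) → (Fin n → Bool)),
      ∃ Q : Finset (Fin n → Bool), Q.card ≤ q ∧
        ∀ g, (∀ u ∈ Q, g u = f u) → A ρ g z = A ρ f z) :
    ((Finset.univ.filter
        (fun p : Equiv.Perm (Fin n → Bool) × (Fin n → Bool) × R =>
          A p.2.2 p.1 (p.1 p.2.1) = p.2.1)).card : ℝ)
      / (Fintype.card (Equiv.Perm (Fin n → Bool) × (Fin n → Bool) × R))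
    ≤ (2 * q + 1) / 2 ^ n := by
  choose Q hQcard hQ using hq
  have h_count := card_inverts_mul_card_le hQ hQcard
  rw [Fintype.card_fun, Fintype.card_bool, Fintype.card_fin] at h_count
  refine div_le_of_le_mul₀ (Nat.cast_nonneg _) (by positivity) ?_
  rw [div_mul_eq_mul_div, le_div_iff₀ (by positivity)]
  exact_mod_cast h_count

/-- One-wayness of a random permutation: let `f` be a uniformly random
permutation of `{0,1}^n` and `x` uniform in `{0,1}^n`.  For any (possibly
randomized, with randomness `ρ` uniform in a finite set `R`) oracle algorithm
`A` making at most `q` queries to `f`, the probability that `A^f (f x) = x` is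
at most `(2q + 1) / 2^n`. -/
theorem stmt_7 (n q : ℕ) {R : Type*} [Fintype R] [Nonempty R]
    (A : R → ((Fin n → Bool) → (Fin n → Bool)) → (Fin n → Bool) → (Fin n → Bool))
    (hq : ∀ (ρ : R) (z : Fin n → Bool) (f : (Fin n → Bool) → (Fin n → Bool)),
      ∃ Q : Finset (Fin n → Bool), Q.card ≤ q ∧
        ∀ g, (∀ u ∈ Q, g u = f u) → A ρ g z = A ρ f z) :
    ((Finset.univ.filter
        (fun p : Equiv.Perm (Fin n → Bool) × (Fin n → Bool) × R =>
          A p.2.2 p.1 (p.1 p.2.1) = p.2.1)).card : ℝ)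
      / (Fintype.card (Equiv.Perm (Fin n → Bool) × (Fin n → Bool) × R))
    ≤ (2 * q + 1) / 2 ^ n :=
  stmt_7_general n q A hq
end

section
/- Let Y ⊆ {0,1}^n with |Y| = 2^{n/100r} dividing 2^n, let f be drawn uniformly from the regular surjections {0,1}^n → Y, and let x be uniform in {0,1}^n. For any oracle algorithm A making at most q = 2^{n/1000r} queries to f (and to an arbitrary fixed oracle independent of f), the probability that A(f(x)) outputs some x' with f(x') = f(x) is at most (2q+1)/|Y|. -/
/-!
Let `N = 2^n`, so every regular map has fibres of size `K = N / |Y|` over `Y`. Fix the target `y`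
and write `F f = A f y`. A map `f` with `f (F f) = y` agrees, away from `u = F f`, with a map
certified by at most `q` queries to output `u`; call the maps with this property `B u`. Swapping
the values at `u` and at a point `b` outside the certificate stays in `B u`, and when
`f u = y ≠ f b` it moves the value `y` from `u` to `b`. There are at least `N - K - q` such `b`,
while a map takes the value `y` at most `K` times, so double counting shows that at most a
fraction `K / (N - K - q)` of `B u` sends `u` to `y`. A map lies in `B u` for at most `2q`
points `u`: at most one `u` avoided by its certificate, and at most `2q - 1` others, because
certificates for distinct outputs `u ≠ v` must conflict, which here can only happen at `u` or `v`,
so each pair is charged to one of the at most `q - 1` other points of a certificate. Hence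
`f (A f y) = y` for at most a fraction `2qK / (N - K - q)` of the regular maps, which is at most
`(2q + 1) / |Y|` because the parameters give `(2q + 1)(K + q) ≤ N`; averaging over `y = f x`
gives the theorem.
-/

open Finset
open scoped Classical

/-- The set of regular surjections from `{0,1}^n` onto `Y`. -/
noncomputable def regSurj (n : ℕ) (Y : Finset (Fin n → Bool)) :
    Finset ((Fin n → Bool) → (Fin n → Bool)) :=
  Finset.univ.filter (fun f =>
    (∀ a, f a ∈ Y) ∧
    ∀ y ∈ Y, (Finset.univ.filter (fun a => f a = y)).card = 2 ^ n / Y.card)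

variable {α β γ : Type*}

def IsCertificate (F : (α → β) → γ) (f : α → β) (Q : Finset α) : Prop :=
  ∀ g : α → β, (∀ v ∈ Q, g v = f v) → F g = F f

namespace IsCertificate

variable {F : (α → β) → γ} {f g : α → β} {Q Q' : Finset α}

lemma of_eqOn (hf : IsCertificate F f Q) (hfg : ∀ v ∈ Q, g v = f v) : IsCertificate F g Q :=
  fun h hh => (hf h fun v hv => (hh v hv).trans (hfg v hv)).trans (hf g hfg).symm

lemma eq_of_eqOn_inter (hf : IsCertificate F f Q) (hg : IsCertificate F g Q')
    (hfg : ∀ v ∈ Q, v ∈ Q' → f v = g v) : F f = F g := by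
  let h : α → β := fun v => if v ∈ Q then f v else g v
  have hhf : F h = F f := hf h fun v hv => if_pos hv
  have hhg : F h = F g := hg h fun v hv => by
    by_cases hvQ : v ∈ Q
    · simp only [h, if_pos hvQ, hfg v hvQ hv]
    · simp only [h, if_neg hvQ]
  exact hhf.symm.trans hhg

end IsCertificate

lemma card_le_two_mul_add_one_of_forall_mem_or_mem [DecidableEq α] {U : Finset α}
    {S : α → Finset α} {m : ℕ} (hS : ∀ u ∈ U, #(S u) ≤ m)
    (hU : ∀ u ∈ U, ∀ v ∈ U, u ≠ v → v ∈ S u ∨ u ∈ S v) :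
    #U ≤ 2 * m + 1 := by
  have hout : ∀ u ∈ U, #{v ∈ U | v ∈ S u} ≤ m := fun u hu =>
    (card_le_card fun v hv => (mem_filter.1 hv).2).trans (hS u hu)
  have hsymm : ∑ u ∈ U, #{v ∈ U | u ∈ S v} = ∑ v ∈ U, #{u ∈ U | u ∈ S v} :=
    sum_card_bipartiteAbove_eq_sum_card_bipartiteBelow (fun u v => u ∈ S v)
  have hpairs : #U * (#U - 1) ≤ 2 * (#U * m) :=
    calc #U * (#U - 1) = ∑ u ∈ U, #(U.erase u) := by
          rw [sum_congr rfl fun u hu => card_erase_of_mem hu, sum_const, smul_eq_mul]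
      _ ≤ ∑ u ∈ U, (#{v ∈ U | v ∈ S u} + #{v ∈ U | u ∈ S v}) := by
          refine sum_le_sum fun u hu => (card_le_card fun v hv => ?_).trans (card_union_le _ _)
          obtain ⟨hvu, hvU⟩ := mem_erase.1 hv
          rcases hU u hu v hvU hvu.symm with h | h <;> simp [hvU, h]
      _ ≤ 2 * (#U * m) := by
          rw [sum_add_distrib, hsymm, ← two_mul]
          exact Nat.mul_le_mul_left 2 (sum_le_card_nsmul U _ m hout)
  rcases Nat.eq_zero_or_pos #U with h | h
  · omega
  · have := Nat.le_of_mul_le_mul_left (hpairs.trans_eq (mul_left_comm 2 _ _)) h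
    omega

lemma sum_card_le_card_mul [Fintype α] [DecidableEq γ] {S : Finset γ} {B : α → Finset γ}
    {m : ℕ} (hB : ∀ u, B u ⊆ S) (hm : ∀ f ∈ S, #{u | f ∈ B u} ≤ m) :
    ∑ u, #(B u) ≤ #S * m := by
  calc ∑ u, #(B u) = ∑ u, #{f ∈ S | f ∈ B u} := by
        simp only [filter_mem_eq_inter, inter_eq_right.2 (hB _)]
    _ = ∑ f ∈ S, #{u | f ∈ B u} :=
        sum_card_bipartiteAbove_eq_sum_card_bipartiteBelow (fun u f => f ∈ B u)
    _ ≤ #S * m := by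
        rw [← smul_eq_mul, ← sum_const]
        exact sum_le_sum hm

lemma comp_swap_apply_of_notMem [DecidableEq α] {f : α → β} {u b v : α} {Q : Finset α}
    (hb : b ∉ Q) (hv : v ∈ Q) (hvu : v ≠ u) : (f ∘ Equiv.swap u b) v = f v := by
  rw [Function.comp_apply, Equiv.swap_apply_of_ne_of_ne hvu (ne_of_mem_of_not_mem hv hb)]

lemma injOn_comp_swap [DecidableEq α] (f : α → β) (u : α) :
    Set.InjOn (fun b => f ∘ Equiv.swap u b) {b | f b ≠ f u} := by
  intro b hb b' _ hbb'
  by_contra hne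
  have hbu : b ≠ u := by rintro rfl; exact hb rfl
  have := congrFun hbb' b
  simp only [Function.comp_apply, Equiv.swap_apply_right,
    Equiv.swap_apply_of_ne_of_ne hbu hne] at this
  exact hb this.symm

lemma card_filter_apply_eq_mul_le_of_comp_swap_mem [Fintype α] [DecidableEq α] [DecidableEq β]
    {B : Finset (α → β)} {u : α} {y : β} {K q : ℕ}
    (hfib : ∀ g ∈ B, #{a | g a = y} ≤ K)
    (hswap : ∀ f ∈ B, ∃ P : Finset α, #P ≤ q ∧ ∀ b ∉ P, f ∘ Equiv.swap u b ∈ B) :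
    #{f ∈ B | f u = y} * (Fintype.card α - K - q) ≤ #B * K := by
  refine card_mul_le_card_mul (fun f g => ∃ b, f b ≠ y ∧ g = f ∘ Equiv.swap u b)
    (fun f hf => ?_) (fun g hg => ?_)
  · obtain ⟨hfB, hfu⟩ := mem_filter.1 hf
    obtain ⟨P, hP, hPswap⟩ := hswap f hfB
    set G : Finset α := (P ∪ ({b | f b = y} : Finset α))ᶜ
    have hG : Fintype.card α - K - q ≤ #G := by
      have := (card_union_le P ({b | f b = y} : Finset α)).trans (add_le_add hP (hfib f hfB))
      rw [card_compl]
      omega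
    have hinj : Set.InjOn (fun b => f ∘ Equiv.swap u b) G :=
      (injOn_comp_swap f u).mono fun b hb => by simp_all [G]
    refine hG.trans ((card_image_of_injOn hinj).symm.trans_le (card_le_card ?_))
    intro g hg
    obtain ⟨b, hb, rfl⟩ := mem_image.1 hg
    simp only [G, mem_compl, mem_union, mem_filter, mem_univ, true_and, not_or] at hb
    exact (mem_bipartiteAbove _).2 ⟨hPswap b hb.1, b, hb.2, rfl⟩
  · refine (card_le_card (t := ({a | g a = y} : Finset α).image fun b => g ∘ Equiv.swap u b)
      fun f hf => ?_).trans (card_image_le.trans (hfib g hg))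
    obtain ⟨hfs, b, -, rfl⟩ := (mem_bipartiteBelow _).1 hf
    refine mem_image.2 ⟨b, ?_, ?_⟩
    · simpa using (mem_filter.1 hfs).2
    · funext a; simp

section QueryBound

variable (S : Finset (α → β)) (F : (α → β) → α) (q : ℕ)

noncomputable def certifiedAvoiding (u : α) : Finset (α → β) :=
  {f ∈ S | F f = u ∧ ∃ Q : Finset α, #Q ≤ q ∧ u ∉ Q ∧ IsCertificate F f Q}

noncomputable def certifiedExceptAt (u : α) : Finset (α → β) :=
  {f ∈ S | ∃ (g : α → β) (Q : Finset α), #Q ≤ q ∧ u ∈ Q ∧ IsCertificate F g Q ∧ F g = u ∧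
    ∀ v ∈ Q, v ≠ u → f v = g v}

noncomputable def nearlyCertified (u : α) : Finset (α → β) :=
  certifiedAvoiding S F q u ∪ certifiedExceptAt S F q u

variable {S F q}

lemma mem_certifiedAvoiding {u : α} {f : α → β} :
    f ∈ certifiedAvoiding S F q u ↔
      f ∈ S ∧ F f = u ∧ ∃ Q : Finset α, #Q ≤ q ∧ u ∉ Q ∧ IsCertificate F f Q :=
  mem_filter

lemma mem_certifiedExceptAt {u : α} {f : α → β} :
    f ∈ certifiedExceptAt S F q u ↔ f ∈ S ∧ ∃ (g : α → β) (Q : Finset α), #Q ≤ q ∧ u ∈ Q ∧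
      IsCertificate F g Q ∧ F g = u ∧ ∀ v ∈ Q, v ≠ u → f v = g v :=
  mem_filter

lemma exists_comp_swap_mem_certifiedAvoiding [DecidableEq α]
    (hS : ∀ f ∈ S, ∀ a b, f ∘ Equiv.swap a b ∈ S) {u : α} {f : α → β}
    (hf : f ∈ certifiedAvoiding S F q u) :
    ∃ P : Finset α, #P ≤ q ∧ ∀ b ∉ P, f ∘ Equiv.swap u b ∈ certifiedAvoiding S F q u := by
  obtain ⟨hfS, hFf, Q, hQ, huQ, hcert⟩ := mem_certifiedAvoiding.1 hf
  refine ⟨Q, hQ, fun b hb => ?_⟩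
  have hagree : ∀ v ∈ Q, (f ∘ Equiv.swap u b) v = f v := fun v hv =>
    comp_swap_apply_of_notMem hb hv (ne_of_mem_of_not_mem hv huQ)
  exact mem_certifiedAvoiding.2
    ⟨hS f hfS u b, (hcert _ hagree).trans hFf, Q, hQ, huQ, hcert.of_eqOn hagree⟩

lemma exists_comp_swap_mem_certifiedExceptAt [DecidableEq α]
    (hS : ∀ f ∈ S, ∀ a b, f ∘ Equiv.swap a b ∈ S) {u : α} {f : α → β}
    (hf : f ∈ certifiedExceptAt S F q u) :
    ∃ P : Finset α, #P ≤ q ∧ ∀ b ∉ P, f ∘ Equiv.swap u b ∈ certifiedExceptAt S F q u := by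
  obtain ⟨hfS, g, Q, hQ, huQ, hcert, hFg, hfg⟩ := mem_certifiedExceptAt.1 hf
  refine ⟨Q, hQ, fun b hb => mem_certifiedExceptAt.2 ⟨hS f hfS u b, g, Q, hQ, huQ, hcert, hFg, ?_⟩⟩
  intro v hv hvu
  rw [comp_swap_apply_of_notMem hb hv hvu, hfg v hv hvu]

lemma card_filter_mem_certifiedAvoiding_le [Fintype α] [DecidableEq β] (f : α → β) :
    #{u | f ∈ certifiedAvoiding S F q u} ≤ 1 :=
  card_le_one.2 fun _ hu _ hv =>
    (mem_certifiedAvoiding.1 (mem_filter.1 hu).2).2.1.symm.trans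
      (mem_certifiedAvoiding.1 (mem_filter.1 hv).2).2.1

lemma card_filter_mem_certifiedExceptAt_le [Fintype α] [DecidableEq β] (hq : 1 ≤ q)
    (f : α → β) : #{u | f ∈ certifiedExceptAt S F q u} ≤ 2 * q - 1 := by
  have : Nonempty (α → β) := ⟨f⟩
  have hU : ∀ u ∈ ({u | f ∈ certifiedExceptAt S F q u} : Finset α),
      ∃ (g : α → β) (Q : Finset α), #Q ≤ q ∧ u ∈ Q ∧ IsCertificate F g Q ∧ F g = u ∧
        ∀ v ∈ Q, v ≠ u → f v = g v :=
    fun u hu => (mem_certifiedExceptAt.1 (mem_filter.1 hu).2).2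
  choose! g Q hQ huQ hcert hFg hfg using hU
  suffices h : #{u | f ∈ certifiedExceptAt S F q u} ≤ 2 * (q - 1) + 1 by omega
  refine card_le_two_mul_add_one_of_forall_mem_or_mem (S := fun u => (Q u).erase u)
    (fun u hu => by have := hQ u hu; rw [card_erase_of_mem (huQ u hu)]; omega)
    fun u hu v hv huv => ?_
  -- Certificates for the distinct outputs `u` and `v` must disagree somewhere on `Q u ∩ Q v`,
  -- and both agree with `f` away from their own output point.
  by_contra! h
  simp only [mem_erase, not_and] at h
  refine huv ((hFg u hu).symm.trans
    (((hcert u hu).eq_of_eqOn_inter (hcert v hv) fun w hwu hwv => ?_).trans (hFg v hv)))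
  have hw_ne_u : w ≠ u := by rintro rfl; exact h.2 huv hwv
  have hw_ne_v : w ≠ v := by rintro rfl; exact h.1 huv.symm hwu
  exact (hfg u hu w hwu hw_ne_u).symm.trans (hfg v hv w hwv hw_ne_v)

lemma nearlyCertified_subset (u : α) : nearlyCertified S F q u ⊆ S :=
  union_subset (fun _ hf => (mem_certifiedAvoiding.1 hf).1)
    fun _ hf => (mem_certifiedExceptAt.1 hf).1

lemma mem_nearlyCertified_apply {f : α → β} (hfS : f ∈ S)
    (hF : ∃ Q : Finset α, #Q ≤ q ∧ IsCertificate F f Q) : f ∈ nearlyCertified S F q (F f) := by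
  obtain ⟨Q, hQ, hcert⟩ := hF
  by_cases hu : F f ∈ Q
  · exact mem_union_right _
      (mem_certifiedExceptAt.2 ⟨hfS, f, Q, hQ, hu, hcert, rfl, fun _ _ _ => rfl⟩)
  · exact mem_union_left _ (mem_certifiedAvoiding.2 ⟨hfS, rfl, Q, hQ, hu, hcert⟩)

lemma exists_comp_swap_mem_nearlyCertified [DecidableEq α]
    (hS : ∀ f ∈ S, ∀ a b, f ∘ Equiv.swap a b ∈ S) {u : α} {f : α → β}
    (hf : f ∈ nearlyCertified S F q u) :
    ∃ P : Finset α, #P ≤ q ∧ ∀ b ∉ P, f ∘ Equiv.swap u b ∈ nearlyCertified S F q u := by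
  rcases mem_union.1 hf with hf | hf
  · obtain ⟨P, hP, hPswap⟩ := exists_comp_swap_mem_certifiedAvoiding hS hf
    exact ⟨P, hP, fun b hb => mem_union_left _ (hPswap b hb)⟩
  · obtain ⟨P, hP, hPswap⟩ := exists_comp_swap_mem_certifiedExceptAt hS hf
    exact ⟨P, hP, fun b hb => mem_union_right _ (hPswap b hb)⟩

lemma card_filter_mem_nearlyCertified_le [Fintype α] [DecidableEq β] (hq : 1 ≤ q)
    (f : α → β) : #{u | f ∈ nearlyCertified S F q u} ≤ 2 * q := by
  simp only [nearlyCertified, mem_union, filter_or]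
  have := card_filter_mem_certifiedAvoiding_le (S := S) (F := F) (q := q) f
  have := card_filter_mem_certifiedExceptAt_le (S := S) (F := F) hq f
  have := card_union_le {u | f ∈ certifiedAvoiding S F q u} {u | f ∈ certifiedExceptAt S F q u}
  omega

theorem card_filter_apply_self_eq_mul_le [Fintype α] [DecidableEq α] [DecidableEq β] {y : β}
    {K : ℕ} (hS : ∀ f ∈ S, ∀ a b, f ∘ Equiv.swap a b ∈ S) (hfib : ∀ f ∈ S, #{a | f a = y} ≤ K)
    (hF : ∀ f, ∃ Q : Finset α, #Q ≤ q ∧ IsCertificate F f Q) (hq : 1 ≤ q) :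
    #{f ∈ S | f (F f) = y} * (Fintype.card α - K - q) ≤ 2 * q * (#S * K) := by
  have hcover : {f ∈ S | f (F f) = y} ⊆
      univ.biUnion fun u => {f ∈ nearlyCertified S F q u | f u = y} := fun f hf =>
    mem_biUnion.2 ⟨F f, mem_univ _, mem_filter.2
      ⟨mem_nearlyCertified_apply (mem_filter.1 hf).1 (hF f), (mem_filter.1 hf).2⟩⟩
  calc #{f ∈ S | f (F f) = y} * (Fintype.card α - K - q)
      ≤ ∑ u, #{f ∈ nearlyCertified S F q u | f u = y} * (Fintype.card α - K - q) := by
        rw [← sum_mul]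
        exact Nat.mul_le_mul_right _ ((card_le_card hcover).trans card_biUnion_le)
    _ ≤ ∑ u, #(nearlyCertified S F q u) * K := sum_le_sum fun u _ =>
        card_filter_apply_eq_mul_le_of_comp_swap_mem
          (fun g hg => hfib g (nearlyCertified_subset u hg))
          fun _ hf => exists_comp_swap_mem_nearlyCertified hS hf
    _ ≤ #S * (2 * q) * K := by
        rw [← sum_mul]
        exact Nat.mul_le_mul_right _ (sum_card_le_card_mul nearlyCertified_subset
          fun f _ => card_filter_mem_nearlyCertified_le hq f)
    _ = 2 * q * (#S * K) := by ring

end QueryBound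

section RegularMaps

variable [Fintype α] [DecidableEq α] [Fintype β] [DecidableEq β]

noncomputable def regularMaps (Y : Finset β) (K : ℕ) : Finset (α → β) :=
  {f | (∀ a, f a ∈ Y) ∧ ∀ y ∈ Y, #{a | f a = y} = K}

variable {Y : Finset β} {K : ℕ}

lemma mem_regularMaps {f : α → β} :
    f ∈ regularMaps Y K ↔ (∀ a, f a ∈ Y) ∧ ∀ y ∈ Y, #{a | f a = y} = K := by
  simp [regularMaps]

lemma card_filter_apply_eq_le_of_mem_regularMaps {f : α → β} (hf : f ∈ regularMaps Y K) (y : β) :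
    #{a | f a = y} ≤ K := by
  obtain ⟨hfY, hfib⟩ := mem_regularMaps.1 hf
  by_cases hy : y ∈ Y
  · exact (hfib y hy).le
  · rw [filter_false_of_mem fun a _ (h : f a = y) => hy (h ▸ hfY a), card_empty]
    exact Nat.zero_le K

lemma comp_perm_mem_regularMaps {f : α → β} (hf : f ∈ regularMaps Y K) (σ : Equiv.Perm α) :
    f ∘ σ ∈ regularMaps Y K := by
  obtain ⟨hfY, hfib⟩ := mem_regularMaps.1 hf
  exact mem_regularMaps.2
    ⟨fun a => hfY (σ a), fun y hy => (card_equiv σ (by simp)).trans (hfib y hy)⟩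

lemma card_filter_comp_eq_of_mem_regularMaps {f : α → β} (hf : f ∈ regularMaps Y K)
    (p : β → Prop) [DecidablePred p] : #{x | p (f x)} = K * #{y ∈ Y | p y} := by
  obtain ⟨hfY, hfib⟩ := mem_regularMaps.1 hf
  rw [card_eq_sum_card_fiberwise fun x _ => hfY x, ← sum_filter_add_sum_filter_not Y p]
  have hpos : ∀ y ∈ Y.filter p, #{x ∈ {x | p (f x)} | f x = y} = K := fun y hy => by
    obtain ⟨hyY, hpy⟩ := mem_filter.1 hy
    rw [filter_filter, ← hfib y hyY]
    exact congrArg card (filter_congr fun x _ => ⟨And.right, fun hx => ⟨hx ▸ hpy, hx⟩⟩)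
  have hneg : ∀ y ∈ Y.filter (¬p ·), #{x ∈ {x | p (f x)} | f x = y} = 0 := fun y hy => by
    rw [card_eq_zero, filter_filter]
    exact filter_false_of_mem fun x _ hx => (mem_filter.1 hy).2 (hx.2 ▸ hx.1)
  rw [sum_congr rfl hpos, sum_congr rfl hneg, sum_const, sum_const_zero, smul_eq_mul, add_zero,
    mul_comm]

noncomputable def invertingPairs (A : (α → β) → β → α) (R : Finset (α → β)) :
    Finset ((α → β) × α) :=
  {p | p.1 ∈ R ∧ p.1 (A p.1 (p.1 p.2)) = p.1 p.2}

lemma card_invertingPairs (A : (α → β) → β → α) (R : Finset (α → β)) :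
    #(invertingPairs A R) = ∑ f ∈ R, #{x | f (A f (f x)) = f x} := by
  rw [invertingPairs, card_filter, Fintype.sum_prod_type]
  simp_rw [ite_and]
  rw [sum_congr rfl fun f _ => sum_ite_irrel _ _ _ _]
  simp only [sum_const_zero, ← card_filter]
  rw [← sum_filter, filter_mem_eq_inter, univ_inter]

lemma card_invertingPairs_le (A : (α → β) → β → α) (R : Finset (α → β)) :
    #(invertingPairs A R) ≤ #R * Fintype.card α := by
  rw [card_invertingPairs, ← smul_eq_mul, ← card_univ]
  exact sum_le_card_nsmul _ _ _ fun f _ => card_filter_le _ _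

lemma card_invertingPairs_regularMaps (A : (α → β) → β → α) :
    #(invertingPairs A (regularMaps Y K)) =
      K * ∑ y ∈ Y, #{f ∈ regularMaps Y K | f (A f y) = y} := by
  rw [card_invertingPairs, sum_congr rfl fun f hf =>
    card_filter_comp_eq_of_mem_regularMaps hf fun y => f (A f y) = y, ← mul_sum]
  congr 1
  exact sum_card_bipartiteAbove_eq_sum_card_bipartiteBelow fun (f : α → β) y => f (A f y) = y

theorem card_invertingPairs_regularMaps_mul_card_le (A : (α → β) → β → α) {q : ℕ}
    (hquery : ∀ (z : β) (f : α → β), ∃ Q : Finset α, #Q ≤ q ∧ IsCertificate (A · z) f Q)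
    (hq : 1 ≤ q) (hKY : K * #Y = Fintype.card α) (hN : (2 * q + 1) * (K + q) ≤ Fintype.card α) :
    #(invertingPairs A (regularMaps Y K)) * #Y ≤
      (2 * q + 1) * (#(regularMaps Y K : Finset (α → β)) * Fintype.card α) := by
  set R : Finset (α → β) := regularMaps Y K
  set D := Fintype.card α - K - q
  have hND : Fintype.card α = D + K + q := by
    have : K + q ≤ (2 * q + 1) * (K + q) := Nat.le_mul_of_pos_left _ (by omega)
    omega
  have hD : 2 * q * (K + q) ≤ D := by rw [hND] at hN; nlinarith
  have hDpos : 0 < D := lt_of_lt_of_le (Nat.mul_pos (by omega) (by omega)) hD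
  have hper : ∀ y, #{f ∈ R | f (A f y) = y} * #Y ≤ (2 * q + 1) * #R := by
    intro y
    have h := card_filter_apply_self_eq_mul_le (S := R) (F := (A · y)) (K := K)
      (fun f hf a b => comp_perm_mem_regularMaps hf _)
      (fun f hf => card_filter_apply_eq_le_of_mem_regularMaps hf y) (hquery y) hq
    refine Nat.le_of_mul_le_mul_right ?_ hDpos
    calc #{f ∈ R | f (A f y) = y} * #Y * D = #{f ∈ R | f (A f y) = y} * D * #Y := by ring
      _ ≤ 2 * q * (#R * K) * #Y := Nat.mul_le_mul_right _ h
      _ = 2 * q * #R * (D + K + q) := by rw [← hND, ← hKY]; ring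
      _ ≤ (2 * q + 1) * #R * D := by nlinarith
  calc #(invertingPairs A R) * #Y = K * ∑ y ∈ Y, #{f ∈ R | f (A f y) = y} * #Y := by
        rw [card_invertingPairs_regularMaps, mul_assoc, sum_mul]
    _ ≤ K * ∑ _y ∈ Y, (2 * q + 1) * #R := Nat.mul_le_mul_left _ (sum_le_sum fun y _ => hper y)
    _ = (2 * q + 1) * (#R * Fintype.card α) := by
        rw [sum_const, smul_eq_mul, ← hKY]; ring

end RegularMaps

lemma two_mul_add_one_mul_add_le {q K : ℕ} (hq : 2 ≤ q) (hK : 1 ≤ K) :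
    (2 * q + 1) * (K + q) ≤ K * q ^ 10 := by
  have h4 : (2 * q + 1) * (q + 1) ≤ q ^ 4 := by nlinarith [Nat.mul_le_mul hq hq]
  calc (2 * q + 1) * (K + q) ≤ (2 * q + 1) * (q + 1) * K := by
        rw [mul_assoc]
        exact Nat.mul_le_mul_left _ (by nlinarith)
    _ ≤ q ^ 10 * K :=
        Nat.mul_le_mul_right _ (h4.trans (Nat.pow_le_pow_right (by omega) (by norm_num)))
    _ = K * q ^ 10 := mul_comm _ _

lemma two_mul_add_one_mul_add_le_two_pow {n r q K : ℕ} (hr : 0 < r) (hn : 0 < n)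
    (hdvd : 1000 * r ∣ n) (hq : q = 2 ^ (n / (1000 * r)))
    (hK : K * 2 ^ (n / (100 * r)) = 2 ^ n) : (2 * q + 1) * (K + q) ≤ 2 ^ n := by
  obtain ⟨m, rfl⟩ := hdvd
  have hqm : q = 2 ^ m := by rw [hq, Nat.mul_div_cancel_left m (by omega)]
  have hYq : 2 ^ (1000 * r * m / (100 * r)) = q ^ 10 := by
    rw [hqm, ← pow_mul, show 1000 * r * m = 100 * r * (m * 10) by ring,
      Nat.mul_div_cancel_left _ (by omega)]
  have hq2 : 2 ≤ q := hqm ▸ Nat.le_self_pow (by rintro rfl; simp at hn) 2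
  have hK1 : 1 ≤ K := Nat.pos_of_ne_zero fun h0 => by
    rw [h0, zero_mul] at hK
    exact (pow_pos two_pos _).ne hK
  rw [← hK, hYq]
  exact two_mul_add_one_mul_add_le hq2 hK1

theorem stmt_8_general (n r q : ℕ) (hr : 0 < r)
    (hdvd1000 : 1000 * r ∣ n)
    (hq : q = 2 ^ (n / (1000 * r)))
    (Y : Finset (Fin n → Bool)) (hYcard : Y.card = 2 ^ (n / (100 * r)))
    (hYdvd : Y.card ∣ 2 ^ n)
    (A : ((Fin n → Bool) → (Fin n → Bool)) → (Fin n → Bool) → (Fin n → Bool))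
    (hquery : ∀ (z : Fin n → Bool) (f : (Fin n → Bool) → (Fin n → Bool)),
      ∃ Q : Finset (Fin n → Bool), Q.card ≤ q ∧
        ∀ g, (∀ u ∈ Q, g u = f u) → A g z = A f z) :
    ((Finset.univ.filter
        (fun p : ((Fin n → Bool) → (Fin n → Bool)) × (Fin n → Bool) =>
          p.1 ∈ regSurj n Y ∧ p.1 (A p.1 (p.1 p.2)) = p.1 p.2)).card : ℝ)
      / ((regSurj n Y).card * 2 ^ n)
    ≤ (2 * q + 1) / Y.card := by
  have hY : 0 < Y.card := by rw [hYcard]; positivity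
  have hcard : Fintype.card (Fin n → Bool) = 2 ^ n := by simp
  have hKY : 2 ^ n / Y.card * Y.card = 2 ^ n := Nat.div_mul_cancel hYdvd
  suffices h : #(invertingPairs A (regSurj n Y)) * Y.card ≤
      (2 * q + 1) * ((regSurj n Y).card * Fintype.card (Fin n → Bool)) by
    refine div_le_of_le_mul₀ (by positivity) (by positivity) ?_
    rw [div_mul_eq_mul_div, le_div_iff₀ (by exact_mod_cast hY)]
    exact_mod_cast hcard ▸ h
  rcases Nat.eq_zero_or_pos n with rfl | hn
  · rw [hYcard, Nat.zero_div, pow_zero, mul_one]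
    exact (card_invertingPairs_le A _).trans (Nat.le_mul_of_pos_left _ (by omega))
  have hN := two_mul_add_one_mul_add_le_two_pow (K := 2 ^ n / Y.card) hr hn hdvd1000 hq
    (by rwa [← hYcard])
  -- `regSurj n Y` is `regularMaps Y (2 ^ n / Y.card)` by definition.
  exact card_invertingPairs_regularMaps_mul_card_le A hquery (hq ▸ Nat.one_le_two_pow)
    (hKY.trans hcard.symm) (hN.trans_eq hcard.symm)

/-- Let `Y ⊆ {0,1}^n` with `|Y| = 2^(n/100r)` dividing `2^n`, let `f` be a
uniformly random regular surjection onto `Y` and `x` uniform in `{0,1}^n`.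
For any oracle algorithm `A` (a fixed oracle independent of `f` is absorbed
into `A`'s description) making at most `q = 2^(n/1000r)` queries to `f`,
the probability that `A (f x)` outputs a preimage of `f x` is at most
`(2q + 1) / |Y|`. -/
theorem stmt_8 (n r q : ℕ) (hr : 0 < r)
    (hdvd100 : 100 * r ∣ n) (hdvd1000 : 1000 * r ∣ n)
    (hq : q = 2 ^ (n / (1000 * r)))
    (Y : Finset (Fin n → Bool)) (hYcard : Y.card = 2 ^ (n / (100 * r)))
    (hYdvd : Y.card ∣ 2 ^ n)
    (A : ((Fin n → Bool) → (Fin n → Bool)) → (Fin n → Bool) → (Fin n → Bool))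
    (hquery : ∀ (z : Fin n → Bool) (f : (Fin n → Bool) → (Fin n → Bool)),
      ∃ Q : Finset (Fin n → Bool), Q.card ≤ q ∧
        ∀ g, (∀ u ∈ Q, g u = f u) → A g z = A f z) :
    ((Finset.univ.filter
        (fun p : ((Fin n → Bool) → (Fin n → Bool)) × (Fin n → Bool) =>
          p.1 ∈ regSurj n Y ∧ p.1 (A p.1 (p.1 p.2)) = p.1 p.2)).card : ℝ)
      / ((regSurj n Y).card * 2 ^ n)
    ≤ (2 * q + 1) / Y.card :=
  stmt_8_general n r q hr hdvd1000 hq Y hYcard hYdvd A hquery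
end

section
/- Let P(x) = Σ_j ∏_{i∈e_j} x_i be a multilinear polynomial of degree at most r in Boolean variables with a (δ, rm)-almost independent distribution P_x. Let μ* and E* be the expectation of P and the maximal expectation of any nonempty partial derivative of P under the fully independent distribution with the same marginals. Then Pr_{x←P_x}[P(x) ≥ μ*(1+ε)] ≤ ((1+δ)^r (1 + r^r m^r E*/μ*)/(1+ε))^m. -/
open Finset
open scoped Classical

/-!
Markov's inequality applied to `P^m`. Expanding `P^m` over `m`-tuples of monomials, each term is
the probability that a set `S` of at most `r m` variables is all ones, which almost independence
bounds by `(1 + δ)^|S| ∏_{i ∈ S} Pr[x_i = 1]`. The resulting sum over tuples is bounded by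
induction on the tuple length: given the set `U` of variables fixed by the earlier monomials, a
monomial `e_j` either avoids `U` (these contribute at most `μ*`) or meets it in a nonempty `B ⊆ U`
with `|B| ≤ r`; the monomials with a given `B` contribute at most `E*`, and there are at most
`(|U| + 1)^r ≤ (r m)^r` such `B`.
-/

theorem sum_range_choose_le_add_one_pow (u r : ℕ) :
    ∑ k ∈ range (r + 1), u.choose k ≤ (u + 1) ^ r := by
  induction r with
  | zero => simp
  | succ r ih =>
    calc ∑ k ∈ range (r + 2), u.choose k
        = ∑ k ∈ range (r + 1), u.choose k + u.choose (r + 1) := sum_range_succ _ _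
      _ ≤ (u + 1) ^ r + u * (u + 1) ^ r := by
        gcongr
        calc u.choose (r + 1) ≤ u ^ (r + 1) := Nat.choose_le_pow _ _
          _ ≤ u * (u + 1) ^ r := by rw [pow_succ']; gcongr; omega
      _ = (u + 1) ^ (r + 1) := by ring

theorem card_filter_powerset_card_le {α : Type*} (U : Finset α) (r : ℕ) :
    #(U.powerset.filter (#· ≤ r)) ≤ (#U + 1) ^ r := by
  have hsub : U.powerset.filter (#· ≤ r) ⊆ (range (r + 1)).biUnion (U.powersetCard ·) := by
    intro B hB
    simp only [mem_filter, mem_powerset] at hB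
    exact mem_biUnion.2 ⟨#B, mem_range.2 (by omega), mem_powersetCard.2 ⟨hB.1, rfl⟩⟩
  calc #(U.powerset.filter (#· ≤ r))
      ≤ ∑ k ∈ range (r + 1), #(U.powersetCard k) := (card_le_card hsub).trans card_biUnion_le
    _ ≤ (#U + 1) ^ r := by
      simp only [card_powersetCard]
      exact sum_range_choose_le_add_one_pow _ _

theorem sum_filter_le_mul_pow_le {α : Type*} [Fintype α] {w f : α → ℝ}
    (hw : ∀ x, 0 ≤ w x) (hf : ∀ x, 0 ≤ f x) {K : ℝ} (hK : 0 ≤ K) (m : ℕ) :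
    (∑ x ∈ univ.filter (fun x => K ≤ f x), w x) * K ^ m ≤ ∑ x, w x * f x ^ m := by
  rw [sum_mul]
  calc ∑ x ∈ univ.filter (fun x => K ≤ f x), w x * K ^ m
      ≤ ∑ x ∈ univ.filter (fun x => K ≤ f x), w x * f x ^ m :=
        sum_le_sum fun x hx =>
          mul_le_mul_of_nonneg_left (pow_le_pow_left₀ hK (mem_filter.1 hx).2 m) (hw x)
    _ ≤ ∑ x, w x * f x ^ m :=
        sum_le_sum_of_subset_of_nonneg (filter_subset _ _)
          fun x _ _ => mul_nonneg (hw x) (pow_nonneg (hf x) m)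

section Counting

variable {ι J : Type*} [DecidableEq ι] [Fintype J]

theorem sum_filter_inter_nonempty_prod_sdiff_le {p : ι → ℝ} (hp : ∀ i, 0 ≤ p i)
    {e : J → Finset ι} {r : ℕ} (hdeg : ∀ j, #(e j) ≤ r) {E : ℝ} (hE0 : 0 ≤ E)
    (hE : ∀ B : Finset ι, B.Nonempty →
      ∑ j ∈ univ.filter (fun j => B ⊆ e j), ∏ i ∈ e j \ B, p i ≤ E)
    (U : Finset ι) :
    ∑ j ∈ univ.filter (fun j => (e j ∩ U).Nonempty), ∏ i ∈ e j \ U, p i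
      ≤ (#U + 1) ^ r * E := by
  set T := U.powerset.filter (#· ≤ r)
  have hmaps : ∀ j ∈ univ.filter (fun j => (e j ∩ U).Nonempty), e j ∩ U ∈ T := fun j _ =>
    mem_filter.2
      ⟨mem_powerset.2 inter_subset_right, (card_le_card inter_subset_left).trans (hdeg j)⟩
  rw [← sum_fiberwise_of_maps_to hmaps]
  -- Each fiber `e j ∩ U = B` contributes at most the derivative `∂_B P`.
  have hfiber : ∀ B ∈ T,
      ∑ j ∈ univ.filter (fun j => (e j ∩ U).Nonempty) with e j ∩ U = B, ∏ i ∈ e j \ U, p i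
        ≤ E := by
    intro B _
    rcases B.eq_empty_or_nonempty with rfl | hB
    · rw [filter_filter, filter_false_of_mem fun j _ h => h.1.ne_empty h.2, sum_empty]
      exact hE0
    refine le_trans ?_ (hE B hB)
    calc ∑ j ∈ univ.filter (fun j => (e j ∩ U).Nonempty) with e j ∩ U = B, ∏ i ∈ e j \ U, p i
        = ∑ j ∈ univ.filter (fun j => (e j ∩ U).Nonempty) with e j ∩ U = B,
            ∏ i ∈ e j \ B, p i := by
          refine sum_congr rfl fun j hj => ?_
          rw [← (mem_filter.1 hj).2, sdiff_inter_self_left]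
      _ ≤ ∑ j ∈ univ.filter (fun j => B ⊆ e j), ∏ i ∈ e j \ B, p i := by
          refine sum_le_sum_of_subset_of_nonneg ?_ fun j _ _ => prod_nonneg fun i _ => hp i
          intro j hj
          exact mem_filter.2 ⟨mem_univ j, (mem_filter.1 hj).2 ▸ inter_subset_left⟩
  calc _ ≤ #T • E := sum_le_card_nsmul _ _ _ hfiber
    _ ≤ (#U + 1) ^ r * E := by
      rw [nsmul_eq_mul]
      gcongr
      exact_mod_cast card_filter_powerset_card_le U r

theorem sum_prod_sdiff_le {p : ι → ℝ} (hp : ∀ i, 0 ≤ p i)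
    {e : J → Finset ι} {r : ℕ} (hdeg : ∀ j, #(e j) ≤ r) {E : ℝ} (hE0 : 0 ≤ E)
    (hE : ∀ B : Finset ι, B.Nonempty →
      ∑ j ∈ univ.filter (fun j => B ⊆ e j), ∏ i ∈ e j \ B, p i ≤ E)
    (U : Finset ι) :
    ∑ j, ∏ i ∈ e j \ U, p i ≤ ∑ j, ∏ i ∈ e j, p i + (#U + 1) ^ r * E := by
  rw [← sum_filter_add_sum_filter_not univ (fun j => (e j ∩ U).Nonempty), add_comm]
  gcongr ?_ + ?_
  · calc ∑ j ∈ univ.filter (fun j => ¬(e j ∩ U).Nonempty), ∏ i ∈ e j \ U, p i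
        = ∑ j ∈ univ.filter (fun j => ¬(e j ∩ U).Nonempty), ∏ i ∈ e j, p i := by
          refine sum_congr rfl fun j hj => ?_
          rw [sdiff_eq_self_of_disjoint]
          simpa [disjoint_iff_inter_eq_empty, not_nonempty_iff_eq_empty]
            using (mem_filter.1 hj).2
      _ ≤ ∑ j, ∏ i ∈ e j, p i :=
          sum_le_sum_of_subset_of_nonneg (filter_subset _ _)
            fun j _ _ => prod_nonneg fun i _ => hp i
  · exact sum_filter_inter_nonempty_prod_sdiff_le hp hdeg hE0 hE U

theorem sum_prod_biUnion_sdiff_le_pow {p : ι → ℝ} (hp : ∀ i, 0 ≤ p i)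
    {e : J → Finset ι} {r N : ℕ} (hdeg : ∀ j, #(e j) ≤ r) {A : ℝ} (hA : 0 ≤ A)
    (hstep : ∀ U : Finset ι, #U + r ≤ N → ∑ j, ∏ i ∈ e j \ U, p i ≤ A) :
    ∀ (n : ℕ) (U : Finset ι), #U + r * n ≤ N →
      ∑ t : Fin n → J, ∏ i ∈ (univ.biUnion fun k => e (t k)) \ U, p i ≤ A ^ n := by
  intro n
  induction n with
  | zero => intro U _; simp
  | succ n ih =>
    intro U hU
    have hU' : #U + r + r * n ≤ N := by rw [Nat.mul_succ] at hU; omega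
    have hsplit : ∀ (j : J) (t : Fin n → J),
        ∏ i ∈ (univ.biUnion fun k => e ((Fin.cons j t : Fin (n + 1) → J) k)) \ U, p i
          = (∏ i ∈ e j \ U, p i) * ∏ i ∈ (univ.biUnion fun k => e (t k)) \ (U ∪ e j), p i := by
      intro j t
      have hunion : (univ.biUnion fun k => e ((Fin.cons j t : Fin (n + 1) → J) k))
          = e j ∪ univ.biUnion fun k => e (t k) := by
        ext i
        simp [Fin.exists_fin_succ]
      rw [hunion, ← prod_sdiff (sdiff_subset_sdiff subset_union_left (subset_refl U)), mul_comm]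
      congr 2
      ext i
      simp only [mem_sdiff, mem_union]
      tauto
    calc ∑ t : Fin (n + 1) → J, ∏ i ∈ (univ.biUnion fun k => e (t k)) \ U, p i
        = ∑ j, (∏ i ∈ e j \ U, p i) *
            ∑ t : Fin n → J, ∏ i ∈ (univ.biUnion fun k => e (t k)) \ (U ∪ e j), p i := by
          rw [← (Fin.consEquiv fun _ => J).sum_comp, Fintype.sum_prod_type]
          simp only [Fin.consEquiv_apply, hsplit, mul_sum]
      _ ≤ ∑ j, (∏ i ∈ e j \ U, p i) * A ^ n := by
          refine sum_le_sum fun j _ =>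
            mul_le_mul_of_nonneg_left (ih _ ?_) (prod_nonneg fun i _ => hp i)
          have := card_union_le U (e j)
          have := hdeg j
          omega
      _ ≤ A * A ^ n := by
          rw [← sum_mul]
          exact mul_le_mul_of_nonneg_right (hstep U (by omega)) (pow_nonneg hA n)
      _ = A ^ (n + 1) := (pow_succ' A n).symm

end Counting

section Distributions

variable {ι : Type*} [Fintype ι] [DecidableEq ι]

noncomputable def probAllTrue (w : (ι → Bool) → ℝ) (S : Finset ι) : ℝ :=
  ∑ x ∈ univ.filter (fun x : ι → Bool => ∀ i ∈ S, x i = true), w x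

theorem probAllTrue_le_pow_card_mul_prod {w : (ι → Bool) → ℝ}
    (hw : ∑ x, w x = 1) {p : ι → ℝ} (hp : ∀ i, 0 ≤ p i) {δ : ℝ} (hδ : 0 ≤ δ) {N : ℕ}
    (hai : ∀ M : Finset ι, #M < N → ∀ j ∉ M,
      probAllTrue w (insert j M) ≤ (1 + δ) * p j * probAllTrue w M)
    {S : Finset ι} (hS : #S ≤ N) :
    probAllTrue w S ≤ (1 + δ) ^ #S * ∏ i ∈ S, p i := by
  induction S using Finset.induction_on with
  | empty => simpa [probAllTrue] using hw.le
  | insert j M hj ih =>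
    rw [card_insert_of_notMem hj] at hS ⊢
    rw [prod_insert hj]
    calc probAllTrue w (insert j M)
        ≤ (1 + δ) * p j * probAllTrue w M := hai M (by omega) j hj
      _ ≤ (1 + δ) * p j * ((1 + δ) ^ #M * ∏ i ∈ M, p i) := by
        gcongr
        · exact mul_nonneg (by linarith) (hp j)
        · exact ih (by omega)
      _ = (1 + δ) ^ (#M + 1) * (p j * ∏ i ∈ M, p i) := by ring

theorem sum_prod_bernoulli_mul_prod_indicator (p : ι → ℝ) (S : Finset ι) :
    ∑ x : ι → Bool, (∏ j, if x j then p j else 1 - p j) *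
      ∏ i ∈ S, (if x i then (1 : ℝ) else 0) = ∏ i ∈ S, p i := by
  set g : ι → Bool → ℝ := fun j b =>
    (if b then p j else 1 - p j) * if j ∈ S then (if b then 1 else 0) else 1
  have hfactor : ∀ x : ι → Bool, (∏ j, if x j then p j else 1 - p j) *
      ∏ i ∈ S, (if x i then (1 : ℝ) else 0) = ∏ j, g j (x j) := by
    intro x
    rw [prod_mul_distrib, prod_ite_mem, univ_inter]
  have hsum : ∀ j, ∑ b, g j b = if j ∈ S then p j else 1 := by
    intro j
    by_cases hj : j ∈ S <;> simp [g, hj]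
  simp_rw [hfactor, ← Fintype.prod_sum, hsum, prod_ite_mem, univ_inter]

theorem sum_prod_bernoulli_mul_sum_monomial {K : Type*} (p : ι → ℝ) (s : Finset K)
    (f : K → Finset ι) :
    ∑ x : ι → Bool, (∏ j, if x j then p j else 1 - p j) *
      ∑ k ∈ s, ∏ i ∈ f k, (if x i then (1 : ℝ) else 0) = ∑ k ∈ s, ∏ i ∈ f k, p i := by
  simp_rw [mul_sum]
  rw [sum_comm]
  exact sum_congr rfl fun k _ => sum_prod_bernoulli_mul_prod_indicator p (f k)

theorem sum_mul_sum_monomial_pow {J : Type*} [Fintype J]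
    (w : (ι → Bool) → ℝ) (e : J → Finset ι) (m : ℕ) :
    ∑ x, w x * (∑ j, ∏ i ∈ e j, (if x i then (1 : ℝ) else 0)) ^ m
      = ∑ t : Fin m → J, probAllTrue w (univ.biUnion fun k => e (t k)) := by
  have hmonomial : ∀ (t : Fin m → J) (x : ι → Bool),
      ∏ k, ∏ i ∈ e (t k), (if x i then (1 : ℝ) else 0)
        = if ∀ i ∈ univ.biUnion fun k => e (t k), x i = true then 1 else 0 := by
    intro t x
    simp only [prod_boole]
    split_ifs with h
    · exact prod_eq_one fun k _ => if_pos fun i hi => h i (mem_biUnion.2 ⟨k, mem_univ _, hi⟩)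
    · obtain ⟨i, hi, hxi⟩ := not_forall₂.1 h
      obtain ⟨k, -, hik⟩ := mem_biUnion.1 hi
      exact prod_eq_zero (mem_univ k) (if_neg fun h' => hxi (h' i hik))
  simp_rw [Fintype.sum_pow, mul_sum, hmonomial, mul_ite, mul_one, mul_zero]
  rw [sum_comm]
  simp only [probAllTrue, sum_filter]

theorem sum_mul_sum_monomial_pow_le {J : Type*} [Fintype J] {w : (ι → Bool) → ℝ}
    (hw : ∑ x, w x = 1) {p : ι → ℝ} (hp : ∀ i, 0 ≤ p i) {δ : ℝ} (hδ : 0 ≤ δ) {r m : ℕ}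
    (hai : ∀ M : Finset ι, #M < r * m → ∀ j ∉ M,
      probAllTrue w (insert j M) ≤ (1 + δ) * p j * probAllTrue w M)
    {e : J → Finset ι} (hdeg : ∀ j, #(e j) ≤ r) {E : ℝ} (hE0 : 0 ≤ E)
    (hE : ∀ B : Finset ι, B.Nonempty →
      ∑ j ∈ univ.filter (fun j => B ⊆ e j), ∏ i ∈ e j \ B, p i ≤ E) :
    ∑ x, w x * (∑ j, ∏ i ∈ e j, (if x i then (1 : ℝ) else 0)) ^ m
      ≤ (1 + δ) ^ (r * m) * (∑ j, ∏ i ∈ e j, p i + ((r : ℝ) * m) ^ r * E) ^ m := by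
  have hcard : ∀ t : Fin m → J, #(univ.biUnion fun k => e (t k)) ≤ r * m := fun t =>
    card_biUnion_le.trans <| (sum_le_sum fun k _ => hdeg (t k)).trans (by simp [mul_comm])
  have hstep : ∀ U : Finset ι, #U + r ≤ r * m →
      ∑ j, ∏ i ∈ e j \ U, p i ≤ ∑ j, ∏ i ∈ e j, p i + ((r : ℝ) * m) ^ r * E := by
    intro U hU
    have hpow : ((#U : ℝ) + 1) ^ r ≤ ((r : ℝ) * m) ^ r := by
      rcases Nat.eq_zero_or_pos r with rfl | hr
      · simp
      · have : #U + 1 ≤ r * m := by omega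
        exact pow_le_pow_left₀ (by positivity) (by exact_mod_cast this) r
    exact (sum_prod_sdiff_le hp hdeg hE0 hE U).trans (by gcongr)
  have hA : 0 ≤ ∑ j, ∏ i ∈ e j, p i + ((r : ℝ) * m) ^ r * E :=
    add_nonneg (sum_nonneg fun j _ => prod_nonneg fun i _ => hp i) (by positivity)
  have hcount := sum_prod_biUnion_sdiff_le_pow hp hdeg hA hstep m ∅ (by simp)
  simp only [sdiff_empty] at hcount
  rw [sum_mul_sum_monomial_pow]
  calc ∑ t : Fin m → J, probAllTrue w (univ.biUnion fun k => e (t k))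
      ≤ ∑ t : Fin m → J, (1 + δ) ^ (r * m) * ∏ i ∈ univ.biUnion (fun k => e (t k)), p i := by
        refine sum_le_sum fun t _ =>
          (probAllTrue_le_pow_card_mul_prod hw hp hδ hai (hcard t)).trans ?_
        gcongr
        · exact prod_nonneg fun i _ => hp i
        · linarith
        · exact hcard t
    _ = (1 + δ) ^ (r * m) * ∑ t : Fin m → J, ∏ i ∈ univ.biUnion (fun k => e (t k)), p i :=
        (mul_sum _ _ _).symm
    _ ≤ _ := by gcongr

end Distributions

/-- Kim–Vu style concentration (Theorem 18).  `w` is a distribution `P_x` over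
`{0,1}^ι` which is `(δ, r·m)`-almost independent; `wstar` is the fully
independent (product) distribution with the same marginals `marg`;
`P(x) = Σ_j ∏_{i ∈ e j} x_i` is a multilinear polynomial of degree at most `r`;
`μ* = E_{wstar}[P]` and `E*` is the maximal expectation under `wstar` of a
nonempty partial derivative `∂_B P`.  Then
`Pr_{x ← P_x}[P(x) ≥ μ*(1+ε)] ≤ ((1+δ)^r (1 + r^r m^r E*/μ*)/(1+ε))^m`. -/
theorem stmt_18 {ι : Type*} [Fintype ι] [DecidableEq ι]
    (r m : ℕ) (δ ε : ℝ) (hδ : 0 ≤ δ) (hε : 0 < ε)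
    (w : (ι → Bool) → ℝ) (hw0 : ∀ x, 0 ≤ w x) (hw1 : ∑ x, w x = 1)
    (marg : ι → ℝ)
    (hmarg : ∀ j, marg j = ∑ x ∈ Finset.univ.filter (fun x : ι → Bool => x j = true), w x)
    (wstar : (ι → Bool) → ℝ)
    (hwstar : ∀ x, wstar x = ∏ j, (if x j then marg j else 1 - marg j))
    -- `(δ, r·m)`-almost independence of the distribution `w`
    (hai : ∀ M : Finset ι, M.card < r * m → ∀ j ∉ M,
      (∑ x ∈ Finset.univ.filter
          (fun x : ι → Bool => x j = true ∧ ∀ i ∈ M, x i = true), w x)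
        ≤ (1 + δ) * marg j *
          (∑ x ∈ Finset.univ.filter (fun x : ι → Bool => ∀ i ∈ M, x i = true), w x))
    -- the polynomial `P`
    {J : Type*} [Fintype J] (e : J → Finset ι) (hdeg : ∀ j, (e j).card ≤ r)
    (Pval : (ι → Bool) → ℝ)
    (hP : ∀ x, Pval x = ∑ j, ∏ i ∈ e j, (if x i then (1 : ℝ) else 0))
    (μstar Estar : ℝ)
    (hμ : μstar = ∑ x, wstar x * Pval x) (hμpos : 0 < μstar)
    (hE : IsGreatest
      (Set.range (fun B : {B : Finset ι // B.Nonempty} =>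
        ∑ x, wstar x *
          ∑ j ∈ Finset.univ.filter (fun j : J => B.1 ⊆ e j),
            ∏ i ∈ e j \ B.1, (if x i then (1 : ℝ) else 0))) Estar) :
    ∑ x ∈ Finset.univ.filter (fun x : ι → Bool => μstar * (1 + ε) ≤ Pval x), w x
      ≤ ((1 + δ) ^ r * (1 + (r : ℝ) ^ r * (m : ℝ) ^ r * Estar / μstar)
          / (1 + ε)) ^ m := by
  have hp : ∀ j, 0 ≤ marg j := fun j => (hmarg j).symm ▸ sum_nonneg fun x _ => hw0 x
  have hμ' : μstar = ∑ j, ∏ i ∈ e j, marg i := by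
    rw [hμ, ← sum_prod_bernoulli_mul_sum_monomial marg univ e]
    simp only [hwstar, hP]
  have hE' : ∀ B : Finset ι, B.Nonempty →
      ∑ j ∈ univ.filter (fun j => B ⊆ e j), ∏ i ∈ e j \ B, marg i ≤ Estar := by
    intro B hB
    rw [← sum_prod_bernoulli_mul_sum_monomial]
    simpa only [hwstar] using hE.2 ⟨⟨B, hB⟩, rfl⟩
  have hE0 : 0 ≤ Estar := by
    obtain ⟨⟨B, hB⟩, rfl⟩ := hE.1
    simp only [hwstar, sum_prod_bernoulli_mul_sum_monomial]
    exact sum_nonneg fun j _ => prod_nonneg fun i _ => hp i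
  have hai' : ∀ M : Finset ι, #M < r * m → ∀ j ∉ M,
      probAllTrue w (insert j M) ≤ (1 + δ) * marg j * probAllTrue w M := fun M hM j hj => by
    simpa only [probAllTrue, forall_mem_insert] using hai M hM j hj
  have hmoment := sum_mul_sum_monomial_pow_le hw1 hp hδ hai' hdeg hE0 hE'
  simp only [← hP, ← hμ'] at hmoment
  have hK : 0 < μstar * (1 + ε) := by positivity
  have hP0 : ∀ x, 0 ≤ Pval x := fun x => (hP x).symm ▸
    sum_nonneg fun j _ => prod_nonneg fun i _ => ite_nonneg zero_le_one le_rfl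
  have hmarkov := sum_filter_le_mul_pow_le hw0 hP0 hK.le m
  have hrhs : ((1 + δ) ^ r * (1 + (r : ℝ) ^ r * (m : ℝ) ^ r * Estar / μstar) / (1 + ε)) ^ m
      = (1 + δ) ^ (r * m) * (μstar + ((r : ℝ) * m) ^ r * Estar) ^ m / (μstar * (1 + ε)) ^ m := by
    rw [pow_mul, ← mul_pow ((1 + δ) ^ r), ← div_pow]
    congr 1
    field_simp
    ring
  rw [hrhs, le_div_iff₀ (pow_pos hK m)]
  exact hmarkov.trans hmoment
end
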